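/- arXiv:1702.04007 — 4 statements merged into one kernel-verified Lean document; each statement's English description precedes it below -/
import Mathlib

section
/- Let m be a positive integer and x a real number. For every n ≥ 0, the Hankel determinant of the modified bivariate geometric polynomials satisfies det( (ω̃_{i+j}(x,m))_{0 ≤ i,j ≤ n} ) = (x(x+m))^{C(n+1,2)} · (n+1)! · ∏_{k=0}^n (k!)^2, where C(n+1,2) = n(n+1)/2. -/
/-- Stirling numbers of the second kind:
`S(n,k) = (1/k!) ∑_{j=0}^k (−1)^{k−j} C(k,j) j^n`. -/
noncomputable def stirling2 (n k : ℕ) : ℝ :=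
  (1 / (k.factorial : ℝ)) *
    ∑ j ∈ Finset.range (k + 1), (-1 : ℝ) ^ (k - j) * (k.choose j) * (j : ℝ) ^ n

/-- Modified bivariate geometric polynomials
`ω̃_n(x,m) = ∑_{k=0}^n (k+1)!·S(n,k)·x^k·m^{n−k}`. -/
noncomputable def geomPolyMod (n : ℕ) (x : ℝ) (m : ℕ) : ℝ :=
  ∑ k ∈ Finset.range (n + 1), ((k + 1).factorial : ℝ) * stirling2 n k * x ^ k * (m : ℝ) ^ (n - k)

/-!
Write `ω̃_p(x, m) = Pₚ'(x)` with `Pₚ(y) = ∑ k! S(p,k) y^(k+1) m^(p-k)`; the Stirling recurrence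
becomes `Pₚ₊₁ = y (y + m) Pₚ' - m Pₚ`. Expanding `Pₚ(x + h)` in powers of `h`, this first order
equation turns into a three-term recurrence for the Taylor coefficients: they form the Stieltjes
tableau of a tridiagonal (Jacobi) matrix with off-diagonal entries `i + 1` and
`(i + 2) x (x + m)`, whose zeroth column is `ω̃_p(x, m)`. This matrix is self-adjoint for the
weights `w i = (i + 1) (x (x + m))^i`, so the Hankel matrix factors as `U W Uᵀ` with `U` the lower
triangular tableau (diagonal `p!`) and `W = diag w`.
-/

open Finset Nat Polynomial

theorem Nat.mul_choose_eq_add (j k : ℕ) :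
    j * j.choose k = k * j.choose k + (k + 1) * j.choose (k + 1) := by
  rcases le_or_gt k j with hkj | hjk
  · obtain ⟨d, rfl⟩ := Nat.exists_eq_add_of_le hkj
    have h := Nat.choose_succ_right_eq (k + d) k
    rw [Nat.add_sub_cancel_left] at h
    rw [mul_comm (k + 1), h]
    ring
  · simp [Nat.choose_eq_zero_of_lt hjk, Nat.choose_eq_zero_of_lt (hjk.trans (lt_succ_self k))]

theorem pow_eq_sum_stirlingSecond_mul_choose (n j : ℕ) :
    j ^ n = ∑ k ∈ range (n + 1), stirlingSecond n k * k ! * j.choose k := by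
  induction n with
  | zero => simp
  | succ n ih =>
    have hshift :
        ∑ k ∈ range (n + 1), (k + 1) * stirlingSecond n (k + 1) * (k + 1)! * j.choose (k + 1)
          = ∑ k ∈ range (n + 1), k * stirlingSecond n k * k ! * j.choose k := by
      have h := sum_range_succ' (fun k => k * stirlingSecond n k * k ! * j.choose k) (n + 1)
      rw [sum_range_succ, stirlingSecond_eq_zero_of_lt (lt_succ_self n)] at h
      simpa using h.symm
    calc j ^ (n + 1)
        = ∑ k ∈ range (n + 1), stirlingSecond n k * k ! * (j * j.choose k) := by
          rw [pow_succ, ih, sum_mul]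
          exact sum_congr rfl fun k _ => by ring
      _ = ∑ k ∈ range (n + 1), k * stirlingSecond n k * k ! * j.choose k
            + ∑ k ∈ range (n + 1), stirlingSecond n k * (k + 1)! * j.choose (k + 1) := by
          rw [← sum_add_distrib]
          exact sum_congr rfl fun k _ => by rw [Nat.mul_choose_eq_add, factorial_succ]; ring
      _ = ∑ k ∈ range (n + 2), stirlingSecond (n + 1) k * k ! * j.choose k := by
          rw [← hshift, ← sum_add_distrib, sum_range_succ' _ (n + 1), stirlingSecond_succ_zero,
            zero_mul, zero_mul, add_zero]
          exact sum_congr rfl fun k _ => by rw [stirlingSecond_succ_succ]; ring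

theorem stirling2_eq_stirlingSecond (n k : ℕ) : stirling2 n k = stirlingSecond n k := by
  have hpow : (fun j : ℕ => (j : ℤ) ^ n)
      = ∑ i ∈ range (n + 1),
          ((stirlingSecond n i * i ! : ℕ) : ℤ) • fun j : ℕ => (j.choose i : ℤ) := by
    ext j
    simp only [Finset.sum_apply, Pi.smul_apply, smul_eq_mul]
    exact_mod_cast pow_eq_sum_stirlingSecond_mul_choose n j
  have hdiff : (fwdDiff 1)^[k] (fun j : ℕ => (j : ℤ) ^ n) 0 = stirlingSecond n k * k ! := by
    rw [hpow, fwdDiff_iter_finsetSum, Finset.sum_apply]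
    simp only [fwdDiff_iter_const_smul, Pi.smul_apply, fwdDiff_iter_choose_zero, smul_eq_mul,
      mul_ite, mul_one, mul_zero, sum_ite_eq, mem_range]
    split_ifs with hk
    · push_cast; rfl
    · simp [stirlingSecond_eq_zero_of_lt (by omega : n < k)]
  rw [fwdDiff_iter_eq_sum_shift] at hdiff
  simp only [zero_add, smul_eq_mul, mul_one] at hdiff
  have hreal := congrArg (Int.cast : ℤ → ℝ) hdiff
  push_cast at hreal
  rw [stirling2, hreal]
  field_simp

section JacobiTableau

variable {R : Type*} [CommSemiring R]

/-- `a p i` is the Stieltjes tableau of the tridiagonal matrix `J` with `J i (i + 1) = α i`,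
`J i i = β i` and `J (i + 1) i = γ i`: row `p` of `a` is `e₀ Jᵖ`, so `a p 0` is the moment
`(Jᵖ) 0 0`. -/
structure IsJacobiTableau (a : ℕ → ℕ → R) (α β γ : ℕ → R) : Prop where
  zero : ∀ i, a 0 i = if i = 0 then 1 else 0
  succ_zero : ∀ p, a (p + 1) 0 = β 0 * a p 0 + γ 0 * a p 1
  succ_succ : ∀ p i,
    a (p + 1) (i + 1) = α i * a p i + β (i + 1) * a p (i + 1) + γ (i + 1) * a p (i + 2)

namespace IsJacobiTableau

variable {a : ℕ → ℕ → R} {α β γ : ℕ → R}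

theorem eq_zero_of_lt (h : IsJacobiTableau a α β γ) {p i : ℕ} (hpi : p < i) : a p i = 0 := by
  induction p generalizing i with
  | zero => simp [h.zero, hpi.ne']
  | succ p ih =>
    obtain ⟨i, rfl⟩ := Nat.exists_eq_add_of_lt hpi
    rw [show p + 1 + i + 1 = (p + i + 1) + 1 by ring, h.succ_succ, ih (by omega), ih (by omega),
      ih (by omega)]
    ring

theorem diag (h : IsJacobiTableau a α β γ) (p : ℕ) : a p p = ∏ i ∈ range p, α i := by
  induction p with
  | zero => simp [h.zero]
  | succ p ih =>
    rw [h.succ_succ, ih, h.eq_zero_of_lt (by omega), h.eq_zero_of_lt (by omega), prod_range_succ]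
    ring

/-- `∑ i, w i * a (r + 1) i * v i` after expanding `a (r + 1)` by the recurrence and using
`w (i + 1) * α i = w i * γ i`; its symmetry in `a r` and `v` says that `J` is self-adjoint for the
weights `w`. -/
def jacobiForm (α β w : ℕ → R) (M : ℕ) (u v : ℕ → R) : R :=
  ∑ i ∈ range (M + 1), w i * β i * u i * v i +
    ∑ i ∈ range M, w (i + 1) * α i * (u i * v (i + 1) + u (i + 1) * v i)

theorem jacobiForm_comm (α β w : ℕ → R) (M : ℕ) (u v : ℕ → R) :
    jacobiForm α β w M u v = jacobiForm α β w M v u := by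
  unfold jacobiForm
  congr 1
  · exact sum_congr rfl fun i _ => by ring
  · exact sum_congr rfl fun i _ => by ring

variable {w : ℕ → R}

theorem sum_succ_mul_eq_jacobiForm (h : IsJacobiTableau a α β γ)
    (hw : ∀ i, w (i + 1) * α i = w i * γ i) {r M : ℕ} (hr : r ≤ M) (v : ℕ → R) :
    ∑ i ∈ range (M + 1), w i * a (r + 1) i * v i = jacobiForm α β w M (a r) v := by
  have hγ : ∑ i ∈ range (M + 1), w i * γ i * a r (i + 1) * v i
      = ∑ i ∈ range M, w (i + 1) * α i * a r (i + 1) * v i := by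
    rw [sum_range_succ, h.eq_zero_of_lt (by omega : r < M + 1)]
    simp only [mul_zero, zero_mul, add_zero]
    exact sum_congr rfl fun i _ => by rw [hw]
  have hα : ∑ i ∈ range M, w (i + 1) * α i * (a r i * v (i + 1) + a r (i + 1) * v i)
      = ∑ i ∈ range M, w (i + 1) * α i * a r i * v (i + 1)
        + ∑ i ∈ range M, w (i + 1) * α i * a r (i + 1) * v i := by
    rw [← sum_add_distrib]
    exact sum_congr rfl fun i _ => by ring
  unfold jacobiForm
  rw [hα, ← hγ, sum_range_succ' _ M, sum_range_succ' (fun i => w i * β i * a r i * v i),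
    sum_range_succ' (fun i => w i * γ i * a r (i + 1) * v i), h.succ_zero]
  simp only [h.succ_succ, mul_add, add_mul, sum_add_distrib, mul_assoc, zero_add]
  ring

theorem sum_range_weight_mul_eq_of_lt (h : IsJacobiTableau a α β γ) {r N : ℕ} (hr : r < N)
    (v : ℕ → R) :
    ∑ i ∈ range N, w i * a r i * v i = ∑ i ∈ range (r + 1), w i * a r i * v i := by
  refine (sum_subset (range_subset_range.2 hr) fun i _ hi => ?_).symm
  rw [h.eq_zero_of_lt (by simpa using hi), mul_zero, zero_mul]

theorem sum_weight_mul_eq_moment (h : IsJacobiTableau a α β γ) (hw0 : w 0 = 1)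
    (hw : ∀ i, w (i + 1) * α i = w i * γ i) (r s : ℕ) {N : ℕ} (hr : r < N) :
    ∑ i ∈ range N, w i * a r i * a s i = a (r + s) 0 := by
  induction r generalizing s N with
  | zero => simp [h.zero, hw0, hr]
  | succ r ih =>
    let M := r + s + 1
    calc ∑ i ∈ range N, w i * a (r + 1) i * a s i
        = ∑ i ∈ range (M + 1), w i * a (r + 1) i * a s i := by
          rw [h.sum_range_weight_mul_eq_of_lt hr,
            h.sum_range_weight_mul_eq_of_lt (N := M + 1) (by omega)]
      _ = jacobiForm α β w M (a r) (a s) := h.sum_succ_mul_eq_jacobiForm hw (by omega) _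
      _ = jacobiForm α β w M (a s) (a r) := jacobiForm_comm ..
      _ = ∑ i ∈ range (M + 1), w i * a r i * a (s + 1) i := by
          rw [← h.sum_succ_mul_eq_jacobiForm hw (by omega)]
          exact sum_congr rfl fun i _ => by ring
      _ = a (r + 1 + s) 0 := by rw [ih (s + 1) (by omega), add_right_comm, add_assoc]

end IsJacobiTableau

end JacobiTableau

theorem IsJacobiTableau.det_hankel {R : Type*} [CommRing R] {a : ℕ → ℕ → R} {α β γ w : ℕ → R}
    (h : IsJacobiTableau a α β γ) (hw0 : w 0 = 1)
    (hw : ∀ i, w (i + 1) * α i = w i * γ i) (n : ℕ) :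
    (Matrix.of fun i j : Fin (n + 1) => a (i + j) 0).det =
      (∏ i ∈ range (n + 1), w i) * ∏ i ∈ range (n + 1), a i i ^ 2 := by
  let U : Matrix (Fin (n + 1)) (Fin (n + 1)) R := Matrix.of fun r i => a r i
  have hU : U.IsLowerTriangular := fun r i hri => h.eq_zero_of_lt hri
  have hfac : Matrix.of (fun i j : Fin (n + 1) => a (i + j) 0)
      = U * Matrix.diagonal (fun i : Fin (n + 1) => w i) * U.transpose := by
    ext r s
    rw [Matrix.of_apply, ← h.sum_weight_mul_eq_moment hw0 hw r s r.isLt,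
      ← Fin.sum_univ_eq_sum_range]
    simp only [U, Matrix.mul_apply, Matrix.diagonal_apply, Matrix.transpose_apply, Matrix.of_apply,
      mul_ite, mul_zero, sum_ite_eq', mem_univ, if_true]
    exact sum_congr rfl fun i _ => by ring
  rw [hfac, Matrix.det_mul, Matrix.det_mul, Matrix.det_transpose, Matrix.det_diagonal,
    Matrix.det_of_isLowerTriangular U hU]
  simp [U, Fin.prod_univ_eq_prod_range (fun i => a i i), Fin.prod_univ_eq_prod_range w, prod_pow]
  ring

section GeomPoly

variable {R : Type*} [CommRing R]

/-- `X · ω_p(X, m)` for the bivariate geometric polynomial `ω_p(x, m) = ∑ k! S(p,k) x^k m^(p-k)`. -/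
noncomputable def xGeomPoly (m : R) : ℕ → R[X]
  | 0 => X
  | p + 1 => X * (X + C m) * derivative (xGeomPoly m p) - C m * xGeomPoly m p

theorem factorial_mul_stirlingSecond_mul_pow_succ (m : R) (p k : ℕ) :
    ((k + 1)! * stirlingSecond (p + 1) (k + 1) : ℕ) * m ^ (p - k)
      = (k + 1) * ((k ! * stirlingSecond p k : ℕ) * m ^ (p - k))
        + (k + 1) * m * (((k + 1)! * stirlingSecond p (k + 1) : ℕ) * m ^ (p - (k + 1))) := by
  rcases lt_or_ge k p with hkp | hpk
  · rw [show p - k = p - (k + 1) + 1 by omega, stirlingSecond_succ_succ, factorial_succ]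
    push_cast
    ring
  · rw [stirlingSecond_succ_succ, stirlingSecond_eq_zero_of_lt (by omega : p < k + 1),
      factorial_succ]
    push_cast
    ring

theorem xGeomPoly_eq_sum (m : R) (p : ℕ) :
    xGeomPoly m p
      = ∑ k ∈ range (p + 1), C ((k ! * stirlingSecond p k : ℕ) * m ^ (p - k)) * X ^ (k + 1) := by
  induction p with
  | zero => simp [xGeomPoly]
  | succ p ih =>
    obtain ⟨c, hc⟩ : ∃ c : ℕ → R, ∀ k, c k = (k ! * stirlingSecond p k : ℕ) * m ^ (p - k) :=
      ⟨_, fun _ => rfl⟩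
    have hshift : ∑ k ∈ range (p + 1), C ((k + 1) * m * c (k + 1)) * X ^ (k + 2)
        = ∑ k ∈ range (p + 1), C (k * m * c k) * X ^ (k + 1) := by
      have h := sum_range_succ' (fun k => C (k * m * c k) * X ^ (k + 1)) (p + 1)
      rw [sum_range_succ, hc (p + 1), stirlingSecond_eq_zero_of_lt (lt_succ_self p)] at h
      simpa using h.symm
    simp only [← hc] at ih
    calc xGeomPoly m (p + 1)
        = ∑ k ∈ range (p + 1),
            (C ((k + 1) * c k) * X ^ (k + 2) + C (k * m * c k) * X ^ (k + 1)) := by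
          rw [xGeomPoly, ih, derivative_sum, mul_sum, mul_sum, ← sum_sub_distrib]
          refine sum_congr rfl fun k _ => ?_
          rw [derivative_C_mul_X_pow]
          simp only [map_mul, map_natCast, map_add, map_one, add_tsub_cancel_right]
          push_cast
          ring
      _ = ∑ k ∈ range (p + 2),
            C ((k ! * stirlingSecond (p + 1) k : ℕ) * m ^ (p + 1 - k)) * X ^ (k + 1) := by
          rw [sum_add_distrib, ← hshift, ← sum_add_distrib, sum_range_succ' _ (p + 1)]
          simp only [stirlingSecond_succ_zero, mul_zero, Nat.cast_zero, zero_mul, map_zero,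
            add_zero, Nat.add_sub_add_right, factorial_mul_stirlingSecond_mul_pow_succ, ← hc]
          refine sum_congr rfl fun k _ => ?_
          simp only [map_add]
          ring

theorem geomPolyMod_eq_eval_derivative (p : ℕ) (x : ℝ) (m : ℕ) :
    geomPolyMod p x m = (derivative (xGeomPoly (m : ℝ) p)).eval x := by
  rw [xGeomPoly_eq_sum, geomPolyMod, derivative_sum, eval_finsetSum]
  refine sum_congr rfl fun k _ => ?_
  rw [derivative_C_mul_X_pow, eval_C_mul, eval_X_pow, stirling2_eq_stirlingSecond, factorial_succ]
  push_cast
  ring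

/-- Taylor coefficients of `xGeomPoly m p` at `x`, shifted by one so that index `0` holds the
derivative `ω̃_p(x, m)`. -/
noncomputable def geomTableau (x m : R) (p i : ℕ) : R := (taylor x (xGeomPoly m p)).coeff (i + 1)

theorem derivative_taylor {S : Type*} [CommSemiring S] (r : S) (f : S[X]) :
    derivative (taylor r f) = taylor r (derivative f) := by
  simp [taylor_apply, derivative_comp]

theorem taylor_xGeomPoly_succ (x m : R) (p : ℕ) :
    taylor x (xGeomPoly m (p + 1))
      = X * (X * derivative (taylor x (xGeomPoly m p)))
        + C (2 * x + m) * (X * derivative (taylor x (xGeomPoly m p)))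
        + C (x * (x + m)) * derivative (taylor x (xGeomPoly m p))
        - C m * taylor x (xGeomPoly m p) := by
  rw [xGeomPoly, map_sub, taylor_mul, taylor_mul, taylor_mul, taylor_X, map_add, taylor_X, taylor_C,
    derivative_taylor]
  simp only [map_add, map_mul, C_ofNat]
  ring

theorem isJacobiTableau_geomTableau (x m : R) :
    IsJacobiTableau (geomTableau x m) (fun i => i + 1) (fun i => i * m + 2 * (i + 1) * x)
      (fun i => (i + 2) * (x * (x + m))) where
  zero i := by simp [geomTableau, xGeomPoly, taylor_X, coeff_X]
  succ_zero p := by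
    simp only [geomTableau, taylor_xGeomPoly_succ, coeff_add, coeff_sub, coeff_C_mul, coeff_X_mul,
      coeff_X_mul_zero, coeff_derivative]
    push_cast
    ring
  succ_succ p i := by
    simp only [geomTableau, taylor_xGeomPoly_succ, coeff_add, coeff_sub, coeff_C_mul, coeff_X_mul,
      coeff_derivative]
    push_cast
    ring

end GeomPoly

theorem geomPolyMod_hankel_general (m : ℕ) (x : ℝ) (n : ℕ) :
    Matrix.det (Matrix.of fun i j : Fin (n + 1) => geomPolyMod ((i : ℕ) + (j : ℕ)) x m) =
      (x * (x + m)) ^ ((n + 1).choose 2) * ((n + 1).factorial : ℝ) *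
        ∏ k ∈ Finset.range (n + 1), (k.factorial : ℝ) ^ 2 := by
  have htab := isJacobiTableau_geomTableau x (m : ℝ)
  have hentry (p : ℕ) : geomPolyMod p x m = geomTableau x (m : ℝ) p 0 := by
    rw [geomPolyMod_eq_eval_derivative, geomTableau, taylor_coeff_one]
  have hdiag (p : ℕ) : geomTableau x (m : ℝ) p p = p ! := by
    rw [htab.diag, ← prod_range_add_one_eq_factorial]
    push_cast
    rfl
  simp only [hentry]
  rw [htab.det_hankel (w := fun i => (i + 1) * (x * (x + m)) ^ i) (by simp)
      (fun i => by push_cast; ring),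
    prod_mul_distrib, prod_pow_eq_pow_sum, sum_range_id, ← Nat.choose_two_right]
  simp only [hdiag]
  rw [← prod_range_add_one_eq_factorial]
  push_cast
  ring

/-- The Hankel determinant of the modified bivariate geometric polynomials is
`(x(x+m))^{C(n+1,2)} · (n+1)! · ∏_{k=0}^n (k!)²`. -/
theorem geomPolyMod_hankel (m : ℕ) (hm : 0 < m) (x : ℝ) (n : ℕ) :
    Matrix.det (Matrix.of fun i j : Fin (n + 1) => geomPolyMod ((i : ℕ) + (j : ℕ)) x m) =
      (x * (x + m)) ^ ((n + 1).choose 2) * ((n + 1).factorial : ℝ) *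
        ∏ k ∈ Finset.range (n + 1), (k.factorial : ℝ) ^ 2 :=
  geomPolyMod_hankel_general m x n
end

section
/- Let m be a positive integer. Then for all natural numbers n and k with k ≤ n, the two explicit formulas for the Whitney numbers of the second kind agree: ∑_{i=k}^n C(n,i)·m^{i−k}·S(i,k) = (1/(m^k k!)) ∑_{i=0}^k (−1)^{k−i} C(k,i) (mi+1)^n. -/
/-- Stirling numbers of the second kind (as rationals):
`S(n,k) = (1/k!) ∑_{j=0}^k (−1)^{k−j} C(k,j) j^n`. -/
noncomputable def stirling2q (n k : ℕ) : ℚ :=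
  (1 / (k.factorial : ℚ)) *
    ∑ j ∈ Finset.range (k + 1), (-1 : ℚ) ^ (k - j) * (k.choose j) * (j : ℚ) ^ n

/-
Both sides are `k`-th forward differences at `0`. The alternating sum on the right is
`Δᵏ[(m x + 1)ⁿ](0)`, and `k! S(i,k) = Δᵏ[xⁱ](0)`. Expanding `(m x + 1)ⁿ` binomially and using
linearity of `Δᵏ` gives `∑ᵢ C(n,i) mⁱ k! S(i,k)`; the terms with `i < k` vanish because `Δᵏ` kills
polynomials of degree below `k`.
-/

open Finset fwdDiff Function

section ForwardDifference

variable {R : Type*} [CommRing R]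

lemma fwdDiff_iter_one_apply_zero (f : R → R) (k : ℕ) :
    (Δ_[1])^[k] f 0 = ∑ j ∈ range (k + 1), (-1 : R) ^ (k - j) * k.choose j * f j := by
  simp [fwdDiff_iter_eq_sum_shift, zsmul_eq_mul]

lemma fwdDiff_iter_mul_add_one_pow (a : R) (n k : ℕ) :
    (Δ_[1])^[k] (fun x : R ↦ (a * x + 1) ^ n) =
      ∑ i ∈ range (n + 1), (n.choose i * a ^ i) • (Δ_[1])^[k] (fun x : R ↦ x ^ i) := by
  have hexpand : (fun x : R ↦ (a * x + 1) ^ n) =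
      ∑ i ∈ range (n + 1), (n.choose i * a ^ i) • fun x : R ↦ x ^ i := by
    ext x
    simp only [add_pow, one_pow, mul_one, mul_pow, Finset.sum_apply, Pi.smul_apply, smul_eq_mul]
    exact sum_congr rfl fun i _ ↦ by ring
  simp only [hexpand, fwdDiff_iter_finsetSum, fwdDiff_iter_const_smul]

end ForwardDifference

lemma stirling2q_eq_fwdDiff_iter (n k : ℕ) :
    stirling2q n k = (Δ_[1])^[k] (fun x : ℚ ↦ x ^ n) 0 / k.factorial := by
  rw [stirling2q, fwdDiff_iter_one_apply_zero, one_div_mul_eq_div]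

lemma stirling2q_eq_zero_of_lt {n k : ℕ} (h : n < k) : stirling2q n k = 0 := by
  simp [stirling2q_eq_fwdDiff_iter, fwdDiff_iter_pow_eq_zero_of_lt h]

lemma pow_mul_pow_sub_mul_stirling2q (a : ℚ) (i k : ℕ) :
    a ^ k * (a ^ (i - k) * stirling2q i k) = a ^ i * stirling2q i k := by
  rcases le_or_gt k i with hki | hik
  · rw [← mul_assoc, ← pow_add, Nat.add_sub_cancel' hki]
  · simp [stirling2q_eq_zero_of_lt hik]

lemma sum_alternating_mul_add_one_pow (a : ℚ) (n k : ℕ) :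
    ∑ j ∈ range (k + 1), (-1 : ℚ) ^ (k - j) * k.choose j * (a * j + 1) ^ n =
      k.factorial * ∑ i ∈ range (n + 1), n.choose i * a ^ i * stirling2q i k := by
  rw [← fwdDiff_iter_one_apply_zero (fun x ↦ (a * x + 1) ^ n), fwdDiff_iter_mul_add_one_pow,
    mul_sum]
  simp only [Finset.sum_apply, Pi.smul_apply, smul_eq_mul, stirling2q_eq_fwdDiff_iter]
  refine sum_congr rfl fun i _ ↦ ?_
  field_simp

theorem whitney2_formulas_agree_general (m : ℕ) (hm : 0 < m) (n k : ℕ) :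
    ∑ i ∈ Finset.Icc k n, (n.choose i : ℚ) * (m : ℚ) ^ (i - k) * stirling2q i k =
      (1 / ((m : ℚ) ^ k * k.factorial)) *
        ∑ i ∈ Finset.range (k + 1), (-1 : ℚ) ^ (k - i) * (k.choose i) * ((m : ℚ) * i + 1) ^ n := by
  have hscale : (m : ℚ) ^ k * k.factorial ≠ 0 := by positivity
  have hlow : ∀ i ∈ range (n + 1), i ∉ Icc k n →
      (n.choose i : ℚ) * (m : ℚ) ^ (i - k) * stirling2q i k = 0 := fun i hi hik ↦ by
    have : i < k := by simp only [mem_range, mem_Icc] at hi hik; omega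
    rw [stirling2q_eq_zero_of_lt this, mul_zero]
  have hsub : Icc k n ⊆ range (n + 1) := fun i hi ↦
    mem_range.2 (Nat.lt_succ_of_le (mem_Icc.1 hi).2)
  rw [sum_alternating_mul_add_one_pow, ← mul_assoc, one_div_mul_eq_div, div_mul_eq_mul_div,
    eq_div_iff hscale, sum_subset hsub hlow, sum_mul, mul_sum]
  refine sum_congr rfl fun i _ ↦ ?_
  linear_combination
    ((n.choose i : ℚ) * k.factorial) * pow_mul_pow_sub_mul_stirling2q (m : ℚ) i k

/-- The two explicit formulas for the Whitney numbers of the second kind agree: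
`∑_{i=k}^n C(n,i)·m^{i−k}·S(i,k) = (1/(m^k k!)) ∑_{i=0}^k (−1)^{k−i} C(k,i) (mi+1)^n`. -/
theorem whitney2_formulas_agree (m : ℕ) (hm : 0 < m) (n k : ℕ) (hk : k ≤ n) :
    ∑ i ∈ Finset.Icc k n, (n.choose i : ℚ) * (m : ℚ) ^ (i - k) * stirling2q i k =
      (1 / ((m : ℚ) ^ k * k.factorial)) *
        ∑ i ∈ Finset.range (k + 1), (-1 : ℚ) ^ (k - i) * (k.choose i) * ((m : ℚ) * i + 1) ^ n :=
  whitney2_formulas_agree_general m hm n k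
end

section
/- Let m be a positive integer. The infinite lower-triangular matrices of Whitney numbers of the first and second kind are mutually inverse: for all natural numbers n and k, ∑_{j=0}^n w_m(n,j)·W_m(j,k) equals 1 if n = k and 0 otherwise. -/
/-!
The row generating polynomial of the first kind is `∑ⱼ w_m(n,j) tʲ = ∏_{l<n} (t - 1 - m l)`, so at
`t = m i + 1` it equals `mⁿ n! C(i,n)`. The second kind `W_m(j,k)` is, up to the factor `1/(mᵏ k!)`,
the `k`-th forward difference at `0` of `i ↦ (m i + 1)ʲ`; by linearity the product of the two
matrices is `mⁿ n!/(mᵏ k!)` times the `k`-th forward difference at `0` of `i ↦ C(i,n)`, which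
is `[k = n]`.
-/

/-- Signed Stirling numbers of the first kind, defined by
`X(X−1)(X−2)⋯(X−n+1) = ∑_{i=0}^n s(n,i)·X^i`. -/
noncomputable def stirling1q (n i : ℕ) : ℚ := (descPochhammer ℚ n).coeff i

/-- Whitney numbers of the first kind:
`w_m(n,k) = ∑_{i=0}^n (−1)^{i−k} C(i,k) m^{n−i} s(n,i)`. -/
noncomputable def whitney1q (m n k : ℕ) : ℚ :=
  ∑ i ∈ Finset.range (n + 1), (-1 : ℚ) ^ (i - k) * (i.choose k) * (m : ℚ) ^ (n - i) * stirling1q n i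

/-- Whitney numbers of the second kind:
`W_m(n,k) = (1/(m^k k!)) ∑_{i=0}^k (−1)^{k−i} C(k,i) (mi+1)^n`. -/
noncomputable def whitney2q (m n k : ℕ) : ℚ :=
  (1 / ((m : ℚ) ^ k * k.factorial)) *
    ∑ i ∈ Finset.range (k + 1), (-1 : ℚ) ^ (k - i) * (k.choose i) * ((m : ℚ) * i + 1) ^ n

open Finset Polynomial

lemma sum_range_neg_one_pow_mul_choose_mul_choose {R : Type*} [Ring R] (k n : ℕ) :
    ∑ i ∈ range (k + 1), (-1 : R) ^ (k - i) * k.choose i * i.choose n =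
      if k = n then 1 else 0 := by
  have h := congrArg (Int.cast : ℤ → R) (fwdDiff_iter_choose_zero n k)
  rw [fwdDiff_iter_eq_sum_shift] at h
  simpa using h

lemma sum_range_neg_one_pow_mul_choose_mul_add_one_pow {R : Type*} [CommRing R] (i : ℕ) (y : R) :
    ∑ j ∈ range (i + 1), (-1 : R) ^ (i - j) * i.choose j * (y + 1) ^ j = y ^ i := by
  rw [← add_neg_cancel_right y 1, add_pow]
  exact sum_congr rfl fun j _ => by ring

lemma sum_whitney1q_mul_add_one_pow (m n : ℕ) (y : ℚ) :
    ∑ j ∈ range (n + 1), whitney1q m n j * (y + 1) ^ j =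
      ∑ i ∈ range (n + 1), (m : ℚ) ^ (n - i) * stirling1q n i * y ^ i := by
  simp only [whitney1q, sum_mul]
  rw [sum_comm]
  refine sum_congr rfl fun i hi => ?_
  have hin : i + 1 ≤ n + 1 := by simpa using hi
  rw [← sum_range_neg_one_pow_mul_choose_mul_add_one_pow i y, mul_sum,
    ← sum_subset (range_subset_range.2 hin)]
  · exact sum_congr rfl fun j _ => by ring
  · intro j _ hj
    rw [Nat.choose_eq_zero_of_lt (by simpa using hj)]
    simp

/-- `∑ⱼ w_m(n,j) tʲ = ∏_{l<n} (t - 1 - m l)`, written in the variable `x = (t - 1)/m`. -/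
lemma sum_whitney1q_mul_pow_eq_eval_descPochhammer (m n : ℕ) (x : ℚ) :
    ∑ j ∈ range (n + 1), whitney1q m n j * (m * x + 1) ^ j =
      m ^ n * (descPochhammer ℚ n).eval x := by
  have hdeg : (descPochhammer ℚ n).natDegree < n + 1 := by
    rw [descPochhammer_natDegree]; omega
  rw [sum_whitney1q_mul_add_one_pow, eval_eq_sum_range' hdeg, mul_sum]
  refine sum_congr rfl fun i hi => ?_
  rw [mul_pow, ← pow_sub_mul_pow (m : ℚ) (Nat.lt_succ_iff.1 (mem_range.1 hi)), stirling1q]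
  ring

/-- The matrices of Whitney numbers of the first and second kind are mutually inverse:
`∑_{j=0}^n w_m(n,j)·W_m(j,k) = [n = k]`. -/
theorem whitney_matrices_inverse (m : ℕ) (hm : 0 < m) (n k : ℕ) :
    ∑ j ∈ Finset.range (n + 1), whitney1q m n j * whitney2q m j k =
      if n = k then 1 else 0 := by
  have row (i : ℕ) : ∑ j ∈ range (n + 1), whitney1q m n j * ((m : ℚ) * i + 1) ^ j =
      m ^ n * n.factorial * i.choose n := by
    rw [sum_whitney1q_mul_pow_eq_eval_descPochhammer, descPochhammer_eval_eq_descFactorial,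
      Nat.descFactorial_eq_factorial_mul_choose]
    push_cast
    ring
  calc ∑ j ∈ range (n + 1), whitney1q m n j * whitney2q m j k
      = 1 / ((m : ℚ) ^ k * k.factorial) * ∑ i ∈ range (k + 1), (-1 : ℚ) ^ (k - i) * k.choose i *
          ∑ j ∈ range (n + 1), whitney1q m n j * ((m : ℚ) * i + 1) ^ j := by
        simp only [whitney2q, mul_sum]
        rw [sum_comm]
        exact sum_congr rfl fun _ _ => sum_congr rfl fun _ _ => by ring
    _ = (m : ℚ) ^ n * n.factorial / ((m : ℚ) ^ k * k.factorial) * (if k = n then 1 else 0) := by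
        simp only [row, ← sum_range_neg_one_pow_mul_choose_mul_choose, mul_sum]
        exact sum_congr rfl fun _ _ => by ring
    _ = if n = k then 1 else 0 := by
        rcases eq_or_ne n k with rfl | hnk
        · have : (m : ℚ) ≠ 0 := by positivity
          simp [this, Nat.factorial_ne_zero]
        · simp [hnk, hnk.symm]
end

section
/- Let m and k be natural numbers with m ≥ 1. Then in ℝ[[z]], the exponential generating function of the Whitney numbers of the first kind in the lower index satisfies ∑_{n≥0} w_m(n,k) z^n/n! = exp(−(1/m)·log(1+mz)) · (log(1+mz))^k / (m^k k!), where log(1+mz) denotes the formal power series ∑_{j≥1} (−1)^{j−1}(mz)^j/j. -/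
/-- Signed Stirling numbers of the first kind, defined by
`X(X−1)(X−2)⋯(X−n+1) = ∑_{i=0}^n s(n,i)·X^i`. -/
noncomputable def stirling1 (n i : ℕ) : ℝ := (descPochhammer ℝ n).coeff i

/-- Whitney numbers of the first kind:
`w_m(n,k) = ∑_{i=0}^n (−1)^{i−k} C(i,k) m^{n−i} s(n,i)`. -/
noncomputable def whitney1 (m n k : ℕ) : ℝ :=
  ∑ i ∈ Finset.range (n + 1), (-1 : ℝ) ^ (i - k) * (i.choose k) * (m : ℝ) ^ (n - i) * stirling1 n i

/-- Formal exponential `exp(f) = ∑_k f^k/k!` of a power series, given coefficientwise;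
for `f` with zero constant term, `coeff n (f^k) = 0` whenever `k > n`, so this is the
usual formal exponential. -/
noncomputable def expPS (f : PowerSeries ℝ) : PowerSeries ℝ :=
  PowerSeries.mk fun n =>
    ∑ k ∈ Finset.range (n + 1), (PowerSeries.coeff n (f ^ k)) / k.factorial

/-- The formal power series `log(1+mz) = ∑_{j≥1} (−1)^{j−1}(mz)^j/j`. -/
noncomputable def logOneAddMZ (m : ℕ) : PowerSeries ℝ :=
  PowerSeries.mk fun j => if j = 0 then 0 else (-1 : ℝ) ^ (j - 1) * (m : ℝ) ^ j / j

/-! Write `L = log(1 + m z)`. From `(1 + m z) L' = m`, the coefficients of `L ^ i / i!` satisfy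
the recurrence `s(n+1, i+1) = s(n, i) - n s(n, i+1)` after scaling by `m ^ n / n!`, so
`L ^ i / i! = ∑ₙ m ^ n s(n, i) zⁿ / n!`. Since `L` has no constant term, only the terms `j ≤ n`
of `exp(-L/m) = ∑ⱼ (-1/m) ^ j L ^ j / j!` contribute to the coefficient of `zⁿ` in
`exp(-L/m) L ^ k`, which is therefore `k! ∑ⱼ (-1) ^ j C(j+k, k) m ^ (n-j) s(n, j+k) / n!`; after
dividing by `m ^ k k!` and substituting `i = j + k` this is `w_m(n, k) / n!`. -/

open PowerSeries Finset Nat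

lemma stirling1_eq_zero_of_lt {n i : ℕ} (h : n < i) : stirling1 n i = 0 :=
  Polynomial.coeff_eq_zero_of_natDegree_lt (by rwa [descPochhammer_natDegree])

lemma stirling1_zero_zero : stirling1 0 0 = 1 := by
  simp [stirling1]

lemma stirling1_succ_zero (n : ℕ) : stirling1 (n + 1) 0 = 0 := by
  simp [stirling1, descPochhammer_succ_left, Polynomial.mul_coeff_zero]

lemma stirling1_succ_succ (n i : ℕ) :
    stirling1 (n + 1) (i + 1) = stirling1 n i - n * stirling1 n (i + 1) := by
  rw [stirling1, descPochhammer_succ_right, mul_sub, Polynomial.coeff_sub,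
    Polynomial.coeff_mul_X, ← Polynomial.C_eq_natCast, Polynomial.coeff_mul_C, mul_comm]
  rfl

section PowerSeries

variable {R : Type*} [CommRing R]

lemma coeff_pow_eq_zero_of_lt {f : R⟦X⟧} (hf : constantCoeff f = 0) {a j : ℕ} (h : a < j) :
    coeff a (f ^ j) = 0 :=
  coeff_of_lt_order a ((Nat.cast_lt.mpr h).trans_le (le_order_pow_of_constantCoeff_eq_zero j hf))

lemma coeff_X_mul_derivative (f : R⟦X⟧) (n : ℕ) : coeff n (X * d⁄dX R f) = n * coeff n f := by
  cases n with
  | zero => simp [mul_comm X, coeff_zero_mul_X]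
  | succ n => rw [mul_comm X, coeff_succ_mul_X, coeff_derivative]; push_cast; ring

end PowerSeries

lemma coeff_expPS_mul {f : ℝ⟦X⟧} (hf : constantCoeff f = 0) (g : ℝ⟦X⟧) (n : ℕ) :
    coeff n (expPS f * g) = ∑ j ∈ range (n + 1), coeff n (f ^ j * g) / j ! := by
  have expPS_trunc : ∀ a ≤ n,
      coeff a (expPS f) = coeff a (∑ j ∈ range (n + 1), C ((j ! : ℝ)⁻¹) * f ^ j) := by
    intro a ha
    simp only [expPS, coeff_mk, map_sum, coeff_C_mul, div_eq_inv_mul]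
    refine sum_subset (range_subset_range.mpr (by omega)) fun j _ hj => ?_
    rw [coeff_pow_eq_zero_of_lt hf (by simpa using hj), mul_zero]
  calc coeff n (expPS f * g)
      = coeff n ((∑ j ∈ range (n + 1), C ((j ! : ℝ)⁻¹) * f ^ j) * g) := by
        simp only [coeff_mul]
        exact sum_congr rfl fun p hp => by
          rw [expPS_trunc p.1 (HasAntidiagonal.antidiagonal.fst_le hp)]
    _ = ∑ j ∈ range (n + 1), coeff n (f ^ j * g) / j ! := by
        simp only [sum_mul, map_sum, mul_assoc, coeff_C_mul, div_eq_inv_mul]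

section logOneAddMZ

variable (m : ℕ)

local notation "L" => logOneAddMZ m

lemma constantCoeff_logOneAddMZ : constantCoeff L = 0 := by
  simp [logOneAddMZ]

lemma derivative_logOneAddMZ :
    d⁄dX ℝ L = PowerSeries.mk fun n => (-1 : ℝ) ^ n * (m : ℝ) ^ (n + 1) := by
  ext n
  rw [coeff_derivative, coeff_mk, logOneAddMZ, coeff_mk, if_neg n.succ_ne_zero,
    Nat.add_sub_cancel]
  field_simp
  norm_cast

lemma one_add_C_mul_X_mul_derivative_logOneAddMZ :
    (1 + C (m : ℝ) * X) * d⁄dX ℝ L = C (m : ℝ) := by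
  ext n
  rw [derivative_logOneAddMZ, add_mul, one_mul, map_add, mul_assoc, coeff_C_mul]
  cases n with
  | zero => simp
  | succ n =>
    rw [coeff_mk, mul_comm X, coeff_succ_mul_X, coeff_mk, coeff_C, if_neg n.succ_ne_zero]
    ring

lemma one_add_C_mul_X_mul_derivative_logOneAddMZ_pow (i : ℕ) :
    (1 + C (m : ℝ) * X) * d⁄dX ℝ (L ^ (i + 1)) = C (((i : ℝ) + 1) * m) * L ^ i := by
  rw [derivative_pow, Nat.add_sub_cancel, mul_left_comm, mul_assoc,
    one_add_C_mul_X_mul_derivative_logOneAddMZ]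
  simp only [map_mul, map_add, map_natCast, map_one]
  push_cast
  ring

lemma coeff_succ_logOneAddMZ_pow_succ (n i : ℕ) :
    ((n : ℝ) + 1) * coeff (n + 1) (L ^ (i + 1)) =
      ((i : ℝ) + 1) * m * coeff n (L ^ i) - m * n * coeff n (L ^ (i + 1)) := by
  have h := congrArg (coeff n) (one_add_C_mul_X_mul_derivative_logOneAddMZ_pow m i)
  rw [add_mul, one_mul, map_add, mul_assoc, coeff_C_mul, coeff_X_mul_derivative,
    coeff_derivative, coeff_C_mul] at h
  linarith

theorem coeff_logOneAddMZ_pow (n i : ℕ) :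
    coeff n (L ^ i) = i ! * (m : ℝ) ^ n * stirling1 n i / n ! := by
  induction n generalizing i with
  | zero =>
    rw [coeff_zero_eq_constantCoeff_apply, map_pow, constantCoeff_logOneAddMZ]
    cases i with
    | zero => simp [stirling1_zero_zero]
    | succ i => simp [stirling1_eq_zero_of_lt i.succ_pos]
  | succ n ih =>
    cases i with
    | zero => simp [coeff_one, stirling1_succ_zero]
    | succ i =>
      have hrec := coeff_succ_logOneAddMZ_pow_succ m n i
      rw [ih, ih, factorial_succ i] at hrec
      rw [stirling1_succ_succ, factorial_succ n, factorial_succ i, pow_succ (m : ℝ) n]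
      have hn : (n : ℝ) + 1 ≠ 0 := by positivity
      have hfac : (n ! : ℝ) ≠ 0 := by positivity
      push_cast at hrec ⊢
      field_simp at hrec ⊢
      linear_combination hrec

end logOneAddMZ

lemma whitney1_eq_sum_shift (m n k : ℕ) :
    whitney1 m n k = ∑ j ∈ range (n + 1),
      (-1 : ℝ) ^ j * ((k + j).choose k) * (m : ℝ) ^ (n - (k + j)) * stirling1 n (k + j) := by
  set w : ℕ → ℝ := fun i =>
    (-1 : ℝ) ^ (i - k) * (i.choose k) * (m : ℝ) ^ (n - i) * stirling1 n i
  have below_k : ∑ i ∈ range k, w i = 0 :=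
    sum_eq_zero fun i hi => by simp [w, choose_eq_zero_of_lt (mem_range.mp hi)]
  have above_n : ∑ i ∈ range (n + 1), w i = ∑ i ∈ range (k + (n + 1)), w i :=
    sum_subset (range_subset_range.mpr (by omega)) fun i _ hi => by
      simp [w, stirling1_eq_zero_of_lt (show n < i by simpa using hi)]
  rw [whitney1, above_n, sum_range_add, below_k, zero_add]
  simp only [w, Nat.add_sub_cancel_left]

/-- The EGF of the Whitney numbers of the first kind in the lower index is
`exp(−(1/m)·log(1+mz)) · (log(1+mz))^k / (m^k k!)` in `ℝ[[z]]`. -/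
theorem whitney1_egf (m k : ℕ) (hm : 1 ≤ m) :
    PowerSeries.mk (fun n => whitney1 m n k / n.factorial) =
      expPS (PowerSeries.C (-(1 / (m : ℝ))) * logOneAddMZ m) * (logOneAddMZ m) ^ k *
        PowerSeries.C (1 / ((m : ℝ) ^ k * k.factorial)) := by
  have hm0 : (m : ℝ) ≠ 0 := Nat.cast_ne_zero.mpr (by omega)
  have hconst : constantCoeff (C (-(1 / (m : ℝ))) * logOneAddMZ m) = 0 := by
    simp [constantCoeff_logOneAddMZ]
  ext n
  rw [coeff_mk, coeff_mul_C, coeff_expPS_mul hconst, whitney1_eq_sum_shift, sum_div, sum_mul]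
  refine sum_congr rfl fun j _ => ?_
  rw [mul_pow, ← map_pow, mul_assoc (C _), ← pow_add, coeff_C_mul, coeff_logOneAddMZ_pow,
    add_comm j k]
  rcases lt_or_ge n (k + j) with hlt | hle
  · simp [stirling1_eq_zero_of_lt hlt]
  · obtain ⟨r, rfl⟩ := Nat.exists_eq_add_of_le hle
    rw [Nat.cast_choose ℝ (Nat.le_add_right k j), Nat.add_sub_cancel_left,
      Nat.add_sub_cancel_left, pow_add, pow_add, neg_pow (1 / (m : ℝ)), div_pow, one_pow]
    field_simp
end
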